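/- Let B > 0, let 0 < γ₂ < π/2 and set ψ₂ = π/2 − γ₂. Let (U, ψ) be a solution of the capillary ODE system with parameter B on [−1, 1] such that ψ(ξ) ∈ [−ψ₂, ψ₂] for every ξ, U(ξ) > 0 for every ξ, and λ = sin ψ(1) − sin ψ(−1) > 0. If additionally B ≤ λ²/32, then the minimum U_m of U on [−1, 1] satisfies B·U_m² ≥ λ²/(8B), and the total height variation satisfies U_M − U_m ≤ 4√2/λ, where U_M is the maximum of U on [−1, 1]. Consequently, in physical variables u = aU the height change across the channel is at most (4√2/λ)·a, i.e. it tends to zero to the same order as the plate separation. (Estimates (20)–(23) of the paper.) -/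

import Mathlib

/-!
The quantity `cos ψ + (B/2) U²` is a first integral of the system, written as
`√(1 - sin² ψ) + (B/2) U²` since only `sin ∘ ψ` is known to be differentiable. As `cos ψ ∈ [0, 1]`,
it gives `B (U_M² - U_m²) ≤ 2`. The mean value theorem for `sin ∘ ψ` gives `λ ≤ 2 B U_M`. Squaring
and using `B ≤ λ²/32` yields the lower bound on `B U_m²`, and then
`(U_M - U_m) B U_m ≤ (B/2)(U_M² - U_m²) ≤ 1` bounds the height variation.
-/

open Real Set

/-- A solution of the (normalized) capillary ODE system with parameter `B` on a set `I ⊆ ℝ`. -/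
def IsCapillarySol (B : ℝ) (I : Set ℝ) (U ψ : ℝ → ℝ) : Prop :=
  ∀ ξ ∈ I, ψ ξ ∈ Set.Ioo (-(π / 2)) (π / 2) ∧
    HasDerivAt (fun t => Real.sin (ψ t)) (B * U ξ) ξ ∧
    HasDerivAt U (Real.tan (ψ ξ)) ξ


noncomputable def capillaryEnergy (B : ℝ) (U ψ : ℝ → ℝ) (t : ℝ) : ℝ :=
  √(1 - sin (ψ t) ^ 2) + B / 2 * U t ^ 2

namespace IsCapillarySol

variable {B : ℝ} {U ψ : ℝ → ℝ}

theorem hasDerivAt_capillaryEnergy {I : Set ℝ} (h : IsCapillarySol B I U ψ) {ξ : ℝ} (hξ : ξ ∈ I) :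
    HasDerivAt (capillaryEnergy B U ψ) 0 ξ := by
  obtain ⟨hψ, hsin, hU⟩ := h ξ hξ
  have hcos : 0 < cos (ψ ξ) := cos_pos_of_mem_Ioo hψ
  have hcos_sq : 1 - sin (ψ ξ) ^ 2 = cos (ψ ξ) ^ 2 := by rw [← cos_sq']
  have hsqrt : √(1 - sin (ψ ξ) ^ 2) = cos (ψ ξ) := by rw [hcos_sq, sqrt_sq hcos.le]
  have hroot : HasDerivAt (fun t => √(1 - sin (ψ t) ^ 2))
      (1 / (2 * √(1 - sin (ψ ξ) ^ 2)) * (0 - 2 * sin (ψ ξ) ^ 1 * (B * U ξ))) ξ :=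
    (hasDerivAt_sqrt (by rw [hcos_sq]; positivity)).comp ξ
      ((hasDerivAt_const ξ 1).sub (hsin.pow 2))
  refine (hroot.add ((hU.pow 2).const_mul (B / 2))).congr_deriv ?_
  rw [hsqrt, tan_eq_sin_div_cos]
  field_simp
  ring

theorem capillaryEnergy_eq {a b : ℝ} (h : IsCapillarySol B (Icc a b) U ψ) {x y : ℝ}
    (hx : x ∈ Icc a b) (hy : y ∈ Icc a b) :
    capillaryEnergy B U ψ x = capillaryEnergy B U ψ y := by
  have hconst : ∀ z ∈ Icc a b, capillaryEnergy B U ψ z = capillaryEnergy B U ψ a :=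
    constant_of_has_deriv_right_zero
      (fun z hz => (h.hasDerivAt_capillaryEnergy hz).continuousAt.continuousWithinAt)
      (fun z hz => (h.hasDerivAt_capillaryEnergy (Ico_subset_Icc_self hz)).hasDerivWithinAt)
  rw [hconst x hx, hconst y hy]

theorem mul_sq_sub_sq_le_two {a b : ℝ} (h : IsCapillarySol B (Icc a b) U ψ) {x y : ℝ}
    (hx : x ∈ Icc a b) (hy : y ∈ Icc a b) : B * (U x ^ 2 - U y ^ 2) ≤ 2 := by
  have henergy := h.capillaryEnergy_eq hx hy
  have hx_nonneg : 0 ≤ √(1 - sin (ψ x) ^ 2) := sqrt_nonneg _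
  have hy_le : √(1 - sin (ψ y) ^ 2) ≤ 1 :=
    sqrt_le_one.mpr (by linarith [sq_nonneg (sin (ψ y))])
  simp only [capillaryEnergy] at henergy
  linarith

theorem abs_sin_sub_sin_le {a b C : ℝ} (hab : a ≤ b) (hB : 0 ≤ B)
    (h : IsCapillarySol B (Icc a b) U ψ) (hU : ∀ x ∈ Icc a b, |U x| ≤ C) :
    |sin (ψ b) - sin (ψ a)| ≤ B * C * (b - a) := by
  have hderiv : ∀ x ∈ Ico a b, ‖B * U x‖ ≤ B * C := fun x hx => by
    rw [norm_mul, norm_of_nonneg hB]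
    exact mul_le_mul_of_nonneg_left (hU x (Ico_subset_Icc_self hx)) hB
  simpa using norm_image_sub_le_of_norm_deriv_le_segment' (f := fun t => sin (ψ t))
    (fun x hx => (h x hx).2.1.hasDerivWithinAt) hderiv b (right_mem_Icc.mpr hab)

end IsCapillarySol

theorem sq_div_le_mul_min_sq {B lam Um UM : ℝ} (hB : 0 < B)
    (henergy : B * (UM ^ 2 - Um ^ 2) ≤ 2) (hlam : lam ≤ 2 * (B * UM)) (hlam_pos : 0 < lam)
    (hB_small : B ≤ lam ^ 2 / 32) :
    lam ^ 2 / (8 * B) ≤ B * Um ^ 2 := by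
  have hsq : lam ^ 2 ≤ 4 * B * (B * UM ^ 2) := by nlinarith
  rw [div_le_iff₀ (by positivity)]
  nlinarith

theorem max_sub_min_le {B lam Um UM : ℝ} (hB : 0 < B) (hUm : 0 < Um) (hmM : Um ≤ UM)
    (henergy : B * (UM ^ 2 - Um ^ 2) ≤ 2) (hlam_pos : 0 < lam)
    (hmin : lam ^ 2 / (8 * B) ≤ B * Um ^ 2) :
    UM - Um ≤ 4 * √2 / lam := by
  have hsqrt2 : √2 ^ 2 = 2 := sq_sqrt (by norm_num)
  have hmin' : lam ≤ 2 * √2 * (B * Um) := by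
    refine le_of_sq_le_sq ?_ (by positivity)
    rw [div_le_iff₀ (by positivity)] at hmin
    nlinarith
  have hvar : (UM - Um) * (B * Um) ≤ 1 := by
    nlinarith [mul_nonneg (mul_nonneg hB.le (sub_nonneg.2 hmM)) (sub_nonneg.2 hmM)]
  rw [le_div_iff₀ hlam_pos]
  nlinarith [mul_le_mul_of_nonneg_left hmin' (sub_nonneg.2 hmM), sqrt_nonneg 2]

theorem capillary_height_change_same_order_general
    (B : ℝ) (hB : 0 < B)
    (U ψ : ℝ → ℝ) (h : IsCapillarySol B (Set.Icc (-1) 1) U ψ)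
    (hUpos : ∀ ξ ∈ Set.Icc (-1 : ℝ) 1, 0 < U ξ)
    (lam : ℝ) (hlam : lam = Real.sin (ψ 1) - Real.sin (ψ (-1))) (hlampos : 0 < lam)
    (hBsmall : B ≤ lam ^ 2 / 32)
    (UM Um : ℝ)
    (hUM : IsGreatest (U '' Set.Icc (-1 : ℝ) 1) UM)
    (hUm : IsLeast (U '' Set.Icc (-1 : ℝ) 1) Um) :
    B * Um ^ 2 ≥ lam ^ 2 / (8 * B) ∧
    UM - Um ≤ 4 * Real.sqrt 2 / lam ∧
    ∀ a : ℝ, 0 < a → a * UM - a * Um ≤ 4 * Real.sqrt 2 / lam * a := by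
  obtain ⟨ξM, hξM, rfl⟩ := hUM.1
  obtain ⟨ξm, hξm, rfl⟩ := hUm.1
  have hmM : U ξm ≤ U ξM := hUm.2 (mem_image_of_mem U hξM)
  have henergy := h.mul_sq_sub_sq_le_two hξM hξm
  have hlamUM : lam ≤ 2 * (B * U ξM) := by
    have hbound := h.abs_sin_sub_sin_le (C := U ξM) (by norm_num) hB.le fun x hx => by
      rw [abs_of_pos (hUpos x hx)]
      exact hUM.2 (mem_image_of_mem U hx)
    rw [← hlam] at hbound
    linarith [le_abs_self lam]
  have hmin := sq_div_le_mul_min_sq hB henergy hlamUM hlampos hBsmall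
  have hvar := max_sub_min_le hB (hUpos ξm hξm) hmM henergy hlampos hmin
  refine ⟨hmin, hvar, fun a ha => ?_⟩
  rw [← mul_sub, mul_comm]
  exact mul_le_mul_of_nonneg_right hvar ha.le

/-- Estimates (20)–(23): if additionally `B ≤ λ²/32`, then `B·U_m² ≥ λ²/(8B)` and
`U_M − U_m ≤ 4√2/λ`; in physical variables u = aU (with B = κa²) the height change across
the channel is at most `(4√2/λ)·a`, i.e. of the same order as the plate separation. -/
theorem capillary_height_change_same_order
    (B : ℝ) (hB : 0 < B) (γ₂ : ℝ) (hγ₂ : 0 < γ₂) (hγ₂' : γ₂ < π / 2)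
    (U ψ : ℝ → ℝ) (h : IsCapillarySol B (Set.Icc (-1) 1) U ψ)
    (hψrange : ∀ ξ ∈ Set.Icc (-1 : ℝ) 1, ψ ξ ∈ Set.Icc (-(π / 2 - γ₂)) (π / 2 - γ₂))
    (hUpos : ∀ ξ ∈ Set.Icc (-1 : ℝ) 1, 0 < U ξ)
    (lam : ℝ) (hlam : lam = Real.sin (ψ 1) - Real.sin (ψ (-1))) (hlampos : 0 < lam)
    (hBsmall : B ≤ lam ^ 2 / 32)
    (UM Um : ℝ)
    (hUM : IsGreatest (U '' Set.Icc (-1 : ℝ) 1) UM)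
    (hUm : IsLeast (U '' Set.Icc (-1 : ℝ) 1) Um) :
    B * Um ^ 2 ≥ lam ^ 2 / (8 * B) ∧
    UM - Um ≤ 4 * Real.sqrt 2 / lam ∧
    ∀ a : ℝ, 0 < a → a * UM - a * Um ≤ 4 * Real.sqrt 2 / lam * a :=
  capillary_height_change_same_order_general B hB U ψ h hUpos lam hlam hlampos hBsmall UM Um hUM hUm
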